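/- arXiv:2404.00745 — 2 statements merged into one kernel-verified Lean document; each statement's English description precedes it below -/
import Mathlib

section
/- Let p be a prime and let G be a pro-p group. Then G is Frattini-resistant if and only if the following holds: for every element x ∈ G and every topologically finitely generated closed subgroup H of G, if x^p ∈ Φ(H) then x ∈ H. -/
/-- A pro-`p` group: a compact, Hausdorff, totally disconnected topological group in which
every open normal subgroup has index a power of `p`. -/
def IsProPGroup (p : ℕ) (G : Type*) [Group G] [TopologicalSpace G] [IsTopologicalGroup G] : Prop :=
  CompactSpace G ∧ T2Space G ∧ TotallyDisconnectedSpace G ∧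
    ∀ N : Subgroup G, N.Normal → IsOpen (N : Set G) → ∃ k : ℕ, N.index = p ^ k

/-- A subgroup is topologically finitely generated (and closed) if it is the topological
closure of a subgroup generated by finitely many elements. -/
def IsTopFG {G : Type*} [Group G] [TopologicalSpace G] [IsTopologicalGroup G]
    (H : Subgroup G) : Prop :=
  ∃ S : Set G, S.Finite ∧ (Subgroup.closure S).topologicalClosure = H

open scoped commutatorElement

/-- The Frattini subgroup of a closed subgroup `H` of a pro-`p` group: the topological closure
of the (abstract) subgroup generated by all `p`-th powers and all commutators of elements
of `H`. -/
def frattiniTop (p : ℕ) {G : Type*} [Group G] [TopologicalSpace G] [IsTopologicalGroup G]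
    (H : Subgroup G) : Subgroup G :=
  (Subgroup.closure
      ({x | ∃ h ∈ H, x = h ^ p} ∪ {x | ∃ h₁ ∈ H, ∃ h₂ ∈ H, x = ⁅h₁, h₂⁆})).topologicalClosure

/-- A pro-`p` group is Frattini-resistant if for all topologically finitely generated closed
subgroups `H₁, H₂` one has `Φ(H₁) ⊆ Φ(H₂) ↔ H₁ ⊆ H₂`. -/
def FrattiniResistant (p : ℕ) (G : Type*) [Group G] [TopologicalSpace G]
    [IsTopologicalGroup G] : Prop :=
  ∀ H₁ H₂ : Subgroup G, IsTopFG H₁ → IsTopFG H₂ →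
    (frattiniTop p H₁ ≤ frattiniTop p H₂ ↔ H₁ ≤ H₂)

/-! If `x ^ p ∈ Φ(H)`, let `Z` be the closure of `⟨x⟩`. By continuity, the `p`-th powers of `Z`
are limits of powers of `x ^ p` and its commutators are limits of `1`, so `Φ(Z) ⊆ Φ(H)`, and
Frattini-resistance gives `x ∈ Z ⊆ H`. Conversely, `Φ` is monotone, and `Φ(H₁) ⊆ Φ(H₂)` puts
`x ^ p` into `Φ(H₂)` for every `x ∈ H₁`. -/

section frattiniTop

variable {p : ℕ} {G : Type*} [Group G] [TopologicalSpace G] [IsTopologicalGroup G]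

theorem isClosed_frattiniTop (H : Subgroup G) : IsClosed (frattiniTop p H : Set G) :=
  Subgroup.isClosed_topologicalClosure _

theorem pow_mem_frattiniTop {H : Subgroup G} {h : G} (hh : h ∈ H) : h ^ p ∈ frattiniTop p H :=
  Subgroup.le_topologicalClosure _ (Subgroup.subset_closure (Or.inl ⟨h, hh, rfl⟩))

theorem commutatorElement_mem_frattiniTop {H : Subgroup G} {h₁ h₂ : G} (hh₁ : h₁ ∈ H)
    (hh₂ : h₂ ∈ H) : ⁅h₁, h₂⁆ ∈ frattiniTop p H :=
  Subgroup.le_topologicalClosure _ (Subgroup.subset_closure (Or.inr ⟨h₁, hh₁, h₂, hh₂, rfl⟩))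

theorem frattiniTop_le_iff {H K : Subgroup G} (hK : IsClosed (K : Set G)) :
    frattiniTop p H ≤ K ↔ (∀ h ∈ H, h ^ p ∈ K) ∧ ∀ h₁ ∈ H, ∀ h₂ ∈ H, ⁅h₁, h₂⁆ ∈ K := by
  refine ⟨fun hle ↦ ⟨fun h hh ↦ hle (pow_mem_frattiniTop hh),
    fun h₁ hh₁ h₂ hh₂ ↦ hle (commutatorElement_mem_frattiniTop hh₁ hh₂)⟩, ?_⟩
  rintro ⟨hpow, hcomm⟩
  refine Subgroup.topologicalClosure_minimal _ ?_ hK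
  rw [Subgroup.closure_le]
  rintro _ (⟨h, hh, rfl⟩ | ⟨h₁, hh₁, h₂, hh₂, rfl⟩)
  exacts [hpow h hh, hcomm h₁ hh₁ h₂ hh₂]

theorem frattiniTop_mono {H₁ H₂ : Subgroup G} (hle : H₁ ≤ H₂) :
    frattiniTop p H₁ ≤ frattiniTop p H₂ :=
  (frattiniTop_le_iff (isClosed_frattiniTop H₂)).2
    ⟨fun _ hh ↦ pow_mem_frattiniTop (hle hh),
      fun _ hh₁ _ hh₂ ↦ commutatorElement_mem_frattiniTop (hle hh₁) (hle hh₂)⟩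

theorem isTopFG_topologicalClosure_zpowers (x : G) :
    IsTopFG (Subgroup.zpowers x).topologicalClosure :=
  ⟨{x}, Set.finite_singleton x, by rw [Subgroup.zpowers_eq_closure]⟩

theorem frattiniTop_topologicalClosure_zpowers_le {x : G} {K : Subgroup G}
    (hK : IsClosed (K : Set G)) (hx : x ^ p ∈ K) :
    frattiniTop p (Subgroup.zpowers x).topologicalClosure ≤ K := by
  rw [frattiniTop_le_iff hK]
  constructor
  · intro h hh
    refine hK.closure_subset (map_mem_closure (f := fun a : G ↦ a ^ p) (continuous_pow p) hh ?_)
    rintro _ ⟨n, rfl⟩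
    have hpow_comm : (x ^ n) ^ p = (x ^ p) ^ n := by
      rw [← zpow_natCast, ← zpow_mul, mul_comm, zpow_mul, zpow_natCast]
    simpa only [hpow_comm, SetLike.mem_coe] using K.zpow_mem hx n
  · intro h₁ hh₁ h₂ hh₂
    refine hK.closure_subset
      (map_mem_closure₂ (f := fun a b : G ↦ ⁅a, b⁆) ?_ hh₁ hh₂ ?_)
    · simp only [commutatorElement_def]
      fun_prop
    · rintro _ ⟨m, rfl⟩ _ ⟨n, rfl⟩
      rw [commutatorElement_eq_one_iff_commute.2 (Commute.zpow_zpow_self x m n)]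
      exact K.one_mem

end frattiniTop

theorem frattiniResistant_iff_pow_mem_general (p : ℕ) (G : Type*) [Group G]
    [TopologicalSpace G] [IsTopologicalGroup G] :
    FrattiniResistant p G ↔
      ∀ (x : G) (H : Subgroup G), IsTopFG H → x ^ p ∈ frattiniTop p H → x ∈ H := by
  constructor
  · intro hR x H hH hxp
    have hΦ := frattiniTop_topologicalClosure_zpowers_le (isClosed_frattiniTop H) hxp
    exact (hR _ H (isTopFG_topologicalClosure_zpowers x) hH).1 hΦ
      (Subgroup.le_topologicalClosure _ (Subgroup.mem_zpowers x))
  · intro h H₁ H₂ _ hH₂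
    exact ⟨fun hΦ x hx ↦ h x H₂ hH₂ (hΦ (pow_mem_frattiniTop hx)), frattiniTop_mono⟩

/-- A pro-`p` group `G` is Frattini-resistant if and only if for every
`x ∈ G` and every topologically finitely generated closed subgroup `H` of `G`,
`x ^ p ∈ Φ(H)` implies `x ∈ H`. -/
theorem frattiniResistant_iff_pow_mem (p : ℕ) (hp : p.Prime) (G : Type*) [Group G]
    [TopologicalSpace G] [IsTopologicalGroup G] (hG : IsProPGroup p G) :
    FrattiniResistant p G ↔
      ∀ (x : G) (H : Subgroup G), IsTopFG H → x ^ p ∈ frattiniTop p H → x ∈ H :=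
  frattiniResistant_iff_pow_mem_general p G
end

section
/- Let p be a prime, let G be a pro-p group, and let α₁, α₂, α₃ : G → ℤ/p be continuous homomorphisms. Then the following are equivalent: (1) there exists a continuous homomorphism ρ̄ : G → U₄/Z(U₄) such that π̄_i ∘ ρ̄ = α_i for i = 1, 2, 3, where π̄_i : U₄/Z(U₄) → ℤ/p is the homomorphism induced by the (i,i+1)-entry map on U₄; (2) there exist continuous homomorphisms τ, τ' : G → U₃ such that, for all g ∈ G, τ(g) and A^{α₁(g)}·B^{α₂(g)} have the same image in U₃/⟨C⟩, and τ'(g) and A^{α₂(g)}·B^{α₃(g)} have the same image in U₃/⟨C⟩. -/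
open Matrix

/-- `n × n` matrices over `ℤ/p`. -/
abbrev MatZ (p n : ℕ) := Matrix (Fin n) (Fin n) (ZMod p)

/-- The set of upper unitriangular invertible `n × n` matrices over `ℤ/p`. -/
def UTcarrier (p n : ℕ) : Set (MatZ p n)ˣ :=
  {M | (∀ i j : Fin n, j < i → (M : MatZ p n) i j = 0) ∧ ∀ i : Fin n, (M : MatZ p n) i i = 1}

theorem one_mem_UTcarrier (p n : ℕ) : (1 : (MatZ p n)ˣ) ∈ UTcarrier p n := by
  constructor
  · intro i j h
    rw [Units.val_one, Matrix.one_apply_ne h.ne']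
  · intro i
    rw [Units.val_one, Matrix.one_apply_eq]

theorem mul_mem_UTcarrier {p n : ℕ} {a b : (MatZ p n)ˣ} (ha : a ∈ UTcarrier p n)
    (hb : b ∈ UTcarrier p n) : a * b ∈ UTcarrier p n := by
  constructor
  · intro i j hij
    have : ((a * b : (MatZ p n)ˣ) : MatZ p n) i j = ∑ k, (a : MatZ p n) i k * (b : MatZ p n) k j := by
      rw [Units.val_mul, Matrix.mul_apply]
    rw [this]
    apply Finset.sum_eq_zero
    intro k _
    rcases lt_or_ge k i with hk | hk
    · rw [ha.1 i k hk, zero_mul]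
    · rw [hb.1 k j (lt_of_lt_of_le hij hk), mul_zero]
  · intro i
    have : ((a * b : (MatZ p n)ˣ) : MatZ p n) i i = ∑ k, (a : MatZ p n) i k * (b : MatZ p n) k i := by
      rw [Units.val_mul, Matrix.mul_apply]
    rw [this]
    rw [Finset.sum_eq_single i]
    · rw [ha.2 i, hb.2 i, one_mul]
    · intro k _ hk
      rcases lt_or_gt_of_ne hk with h | h
      · rw [ha.1 i k h, zero_mul]
      · rw [hb.1 k i h, mul_zero]
    · intro h; exact absurd (Finset.mem_univ i) h

/-- The group `U_n` of upper unitriangular `n × n` matrices over `ℤ/p`, as a subgroup of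
the units of the matrix ring. -/
def UT (p n : ℕ) [Fact p.Prime] : Subgroup (MatZ p n)ˣ where
  carrier := UTcarrier p n
  one_mem' := one_mem_UTcarrier p n
  mul_mem' := fun ha hb => mul_mem_UTcarrier ha hb
  inv_mem' := by
    intro a ha
    haveI : NeZero p := ⟨(Fact.out : p.Prime).ne_zero⟩
    have hpow : ∀ m : ℕ, a ^ m ∈ UTcarrier p n := by
      intro m
      induction m with
      | zero => simpa using one_mem_UTcarrier p n
      | succ k ih => rw [pow_succ]; exact mul_mem_UTcarrier ih ha
    have hpos : 0 < orderOf a := orderOf_pos a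
    have hinv : a⁻¹ = a ^ (orderOf a - 1) := by
      apply inv_eq_of_mul_eq_one_right
      rw [← pow_succ']
      rw [Nat.sub_add_cancel hpos]  -- note: pow_succ' : a ^ (n + 1) = a * a ^ n
      exact pow_orderOf_eq_one a
    rw [hinv]
    exact hpow _

variable (p : ℕ) [Fact p.Prime]

/-- Elementary unitriangular matrix `I + c·Eᵢⱼ` in `U₃`. -/
def elemUT3 (i j : Fin 3) (hij : i ≠ j) (hle : i < j) (c : ZMod p) : ↥(UT p 3) := by
  refine ⟨⟨1 + Matrix.single i j c, 1 - Matrix.single i j c, ?_, ?_⟩, ?_, ?_⟩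
  · have h : Matrix.single i j c * Matrix.single i j c = (0 : MatZ p 3) :=
      Matrix.single_mul_single_of_ne c i j i hij.symm c
    have e : (1 + Matrix.single i j c) * (1 - Matrix.single i j c)
        = 1 - Matrix.single i j c * Matrix.single i j c := by noncomm_ring
    rw [e, h, sub_zero]
  · have h : Matrix.single i j c * Matrix.single i j c = (0 : MatZ p 3) :=
      Matrix.single_mul_single_of_ne c i j i hij.symm c
    have e : (1 - Matrix.single i j c) * (1 + Matrix.single i j c)
        = 1 - Matrix.single i j c * Matrix.single i j c := by noncomm_ring
    rw [e, h, sub_zero]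
  · intro a b hab
    have hba : a ≠ b := hab.ne'
    simp only [Matrix.add_apply, Matrix.one_apply_ne hba, Matrix.single, Matrix.of_apply]
    rw [if_neg]
    · ring
    · rintro ⟨rfl, rfl⟩
      exact absurd hle (not_lt.mpr hab.le)
  · intro a
    simp only [Matrix.add_apply, Matrix.one_apply_eq, Matrix.single, Matrix.of_apply]
    rw [if_neg]
    · ring
    · rintro ⟨rfl, rfl⟩
      exact hij rfl

/-- `A = I + E₁₂ ∈ U₃`. -/
def AU : ↥(UT p 3) := elemUT3 p 0 1 (by decide) (by decide) 1

/-- `B = I + E₂₃ ∈ U₃`. -/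
def BU : ↥(UT p 3) := elemUT3 p 1 2 (by decide) (by decide) 1

/-- `C = I + E₁₃ ∈ U₃`. -/
def CU : ↥(UT p 3) := elemUT3 p 0 2 (by decide) (by decide) 1

/-- The `(i, j)` entry of an element of `U₄`. -/
def entryUT4 (M : ↥(UT p 4)) (i j : Fin 4) : ZMod p := ((M : (MatZ p 4)ˣ) : MatZ p 4) i j

/-- Continuity with respect to the discrete topology on the target (the natural topology
on a finite group). -/
def ContinuousToDiscrete {G : Type*} [TopologicalSpace G] {H : Type*} (f : G → H) : Prop :=
  @Continuous G H _ ⊥ f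

/-!
The top-left and bottom-right `3 × 3` corner blocks give a homomorphism `U₄ → U₃ × U₃` whose
kernel is exactly `Z(U₄)` and whose image contains every pair `(X, Y)` with `X₂₃ = Y₁₂`. Hence a
homomorphism `G → U₄/Z(U₄)` is the same as a pair of homomorphisms `G → U₃` agreeing on that
shared entry, and the entries of the two pairs correspond. On the other side,
`(A^a B^b)⁻¹ X ∈ ⟨C⟩` just says that the superdiagonal of `X` is `(a, b)`, since `⟨C⟩` is the
kernel of the superdiagonal homomorphism `U₃ → ℤ/p × ℤ/p`. Continuity transfers in both
directions because each new map is a function of continuous maps into discrete groups.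
-/

namespace Matrix

variable {R : Type*} [NonUnitalNonAssocSemiring R] {n : ℕ}

lemma submatrix_castSucc_mul_of_blockTriangular (M N : Matrix (Fin (n + 1)) (Fin (n + 1)) R)
    (hN : N.BlockTriangular id) :
    (M * N).submatrix Fin.castSucc Fin.castSucc =
      M.submatrix Fin.castSucc Fin.castSucc * N.submatrix Fin.castSucc Fin.castSucc := by
  ext i j
  have : N (Fin.last n) j.castSucc = 0 := hN (Fin.castSucc_lt_last j)
  simp [mul_apply, Fin.sum_univ_castSucc, this]

lemma submatrix_succ_mul_of_blockTriangular (M N : Matrix (Fin (n + 1)) (Fin (n + 1)) R)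
    (hM : M.BlockTriangular id) :
    (M * N).submatrix Fin.succ Fin.succ =
      M.submatrix Fin.succ Fin.succ * N.submatrix Fin.succ Fin.succ := by
  ext i j
  have : M i.succ 0 = 0 := hM (Fin.succ_pos i)
  simp [mul_apply, Fin.sum_univ_succ, this]

end Matrix

variable {p}

namespace UT

variable {n : ℕ}

def mat (X : UT p n) : MatZ p n := ((X : (MatZ p n)ˣ) : MatZ p n)

@[ext] lemma ext {X Y : UT p n} (h : mat X = mat Y) : X = Y := Subtype.ext (Units.ext h)

@[simp] lemma mat_mul (X Y : UT p n) : mat (X * Y) = mat X * mat Y := rfl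

@[simp] lemma mat_one : mat (1 : UT p n) = 1 := rfl

lemma blockTriangular (X : UT p n) : (mat X).BlockTriangular id := fun i j h => X.2.1 i j h

@[simp] lemma mat_apply_self (X : UT p n) (i : Fin n) : mat X i i = 1 := X.2.2 i

noncomputable def ofMatrix (M : MatZ p n) (hM : M.BlockTriangular id)
    (hdiag : ∀ i, M i i = 1) : UT p n :=
  ⟨M.nonsingInvUnit (by simp [Matrix.det_of_isUpperTriangular hM, hdiag]),
    fun _ _ h => hM h, hdiag⟩

@[simp] lemma mat_ofMatrix (M : MatZ p n) (hM : M.BlockTriangular id) (hdiag : ∀ i, M i i = 1) :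
    mat (ofMatrix M hM hdiag) = M := rfl

noncomputable def topLeft : UT p (n + 1) →* UT p n where
  toFun X := ofMatrix ((mat X).submatrix Fin.castSucc Fin.castSucc)
    (fun _ _ h => blockTriangular X (Fin.castSucc_lt_castSucc_iff.2 h)) fun _ => mat_apply_self ..
  map_one' := ext <| Matrix.submatrix_one _ (Fin.castSucc_injective n)
  map_mul' _ Y := ext <| Matrix.submatrix_castSucc_mul_of_blockTriangular _ _ (blockTriangular Y)

noncomputable def bottomRight : UT p (n + 1) →* UT p n where
  toFun X := ofMatrix ((mat X).submatrix Fin.succ Fin.succ)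
    (fun _ _ h => blockTriangular X (Fin.succ_lt_succ_iff.2 h)) fun _ => mat_apply_self ..
  map_one' := ext <| Matrix.submatrix_one _ (Fin.succ_injective n)
  map_mul' X _ := ext <| Matrix.submatrix_succ_mul_of_blockTriangular _ _ (blockTriangular X)

noncomputable def mk3 (a b c : ZMod p) : UT p 3 :=
  ofMatrix !![1, a, c; 0, 1, b; 0, 0, 1]
    (by intro i j h; fin_cases i <;> fin_cases j <;> simp_all) (by intro i; fin_cases i <;> rfl)

@[simp] lemma mat_mk3 (a b c : ZMod p) : mat (mk3 a b c) = !![1, a, c; 0, 1, b; 0, 0, 1] := rfl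

lemma mk3_mul (a b c a' b' c' : ZMod p) :
    mk3 a b c * mk3 a' b' c' = mk3 (a + a') (b + b') (c + c' + a * b') := by
  ext i j
  fin_cases i <;> fin_cases j <;> simp [Matrix.mul_apply, Fin.sum_univ_succ] <;> ring

lemma eq_mk3 (X : UT p 3) : X = mk3 (mat X 0 1) (mat X 1 2) (mat X 0 2) := by
  ext i j
  fin_cases i <;> fin_cases j <;> simp <;> exact blockTriangular X (by decide)

noncomputable def mk4 (a b c d e f : ZMod p) : UT p 4 :=
  ofMatrix !![1, a, d, f; 0, 1, b, e; 0, 0, 1, c; 0, 0, 0, 1]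
    (by intro i j h; fin_cases i <;> fin_cases j <;> simp_all) (by intro i; fin_cases i <;> rfl)

@[simp] lemma mat_mk4 (a b c d e f : ZMod p) :
    mat (mk4 a b c d e f) = !![1, a, d, f; 0, 1, b, e; 0, 0, 1, c; 0, 0, 0, 1] := rfl

lemma mk4_mul (a b c d e f a' b' c' d' e' f' : ZMod p) :
    mk4 a b c d e f * mk4 a' b' c' d' e' f' =
      mk4 (a + a') (b + b') (c + c') (d + d' + a * b') (e + e' + b * c')
        (f + f' + a * e' + d * c') := by
  ext i j
  fin_cases i <;> fin_cases j <;> simp [Matrix.mul_apply, Fin.sum_univ_succ] <;> ring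

lemma eq_mk4 (X : UT p 4) :
    X = mk4 (mat X 0 1) (mat X 1 2) (mat X 2 3) (mat X 0 2) (mat X 1 3) (mat X 0 3) := by
  ext i j
  fin_cases i <;> fin_cases j <;> simp <;> exact blockTriangular X (by decide)

noncomputable def blocks : UT p (n + 1) →* UT p n × UT p n := topLeft.prod bottomRight

lemma blocks_mk4 (a b c d e f : ZMod p) : blocks (mk4 a b c d e f) = (mk3 a b d, mk3 b c e) := by
  ext i j <;> fin_cases i <;> fin_cases j <;> rfl

lemma mk3_eq_one_iff {a b c : ZMod p} : mk3 a b c = 1 ↔ a = 0 ∧ b = 0 ∧ c = 0 := by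
  refine ⟨fun h => ?_, fun ⟨ha, hb, hc⟩ => ?_⟩
  · have h' := congrArg mat h
    refine ⟨?_, ?_, ?_⟩
    · simpa using congrFun (congrFun h' 0) 1
    · simpa using congrFun (congrFun h' 1) 2
    · simpa using congrFun (congrFun h' 0) 2
  · subst ha hb hc
    ext i j
    fin_cases i <;> fin_cases j <;> rfl

lemma mk4_inj {a b c d e f a' b' c' d' e' f' : ZMod p} :
    mk4 a b c d e f = mk4 a' b' c' d' e' f' ↔
      a = a' ∧ b = b' ∧ c = c' ∧ d = d' ∧ e = e' ∧ f = f' := by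
  refine ⟨fun h => ?_, by rintro ⟨rfl, rfl, rfl, rfl, rfl, rfl⟩; rfl⟩
  have h' := congrArg mat h
  refine ⟨?_, ?_, ?_, ?_, ?_, ?_⟩
  · simpa using congrFun (congrFun h' 0) 1
  · simpa using congrFun (congrFun h' 1) 2
  · simpa using congrFun (congrFun h' 2) 3
  · simpa using congrFun (congrFun h' 0) 2
  · simpa using congrFun (congrFun h' 1) 3
  · simpa using congrFun (congrFun h' 0) 3

lemma mk4_mem_center_iff {a b c d e f : ZMod p} :
    mk4 a b c d e f ∈ Subgroup.center (UT p 4) ↔ a = 0 ∧ b = 0 ∧ c = 0 ∧ d = 0 ∧ e = 0 := by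
  rw [Subgroup.mem_center_iff]
  constructor
  · intro h
    have h₁ := h (mk4 1 0 0 0 0 0)
    have h₂ := h (mk4 0 1 0 0 0 0)
    have h₃ := h (mk4 0 0 1 0 0 0)
    simp only [mk4_mul] at h₁ h₂ h₃
    obtain ⟨-, -, -, hd₁, -, hf₁⟩ := mk4_inj.1 h₁
    obtain ⟨-, -, -, hd₂, he₂, -⟩ := mk4_inj.1 h₂
    obtain ⟨-, -, -, -, -, hf₃⟩ := mk4_inj.1 h₃
    refine ⟨?_, ?_, ?_, ?_, ?_⟩
    · linear_combination -hd₂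
    · linear_combination hd₁
    · linear_combination he₂
    · linear_combination -hf₃
    · linear_combination hf₁
  · rintro ⟨rfl, rfl, rfl, rfl, rfl⟩ Y
    rw [eq_mk4 Y, mk4_mul, mk4_mul]
    congr 1 <;> ring

lemma ker_blocks_eq_center :
    (blocks : UT p 4 →* UT p 3 × UT p 3).ker = Subgroup.center (UT p 4) := by
  ext M
  rw [eq_mk4 M, MonoidHom.mem_ker, blocks_mk4, Prod.mk_eq_one, mk3_eq_one_iff, mk3_eq_one_iff,
    mk4_mem_center_iff]
  tauto

noncomputable def blocksModCenter : UT p 4 ⧸ Subgroup.center (UT p 4) →* UT p 3 × UT p 3 :=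
  QuotientGroup.lift _ blocks ker_blocks_eq_center.ge

@[simp] lemma blocksModCenter_mk (M : UT p 4) : blocksModCenter (M : UT p 4 ⧸ _) = blocks M := rfl

lemma blocksModCenter_injective : Function.Injective (blocksModCenter (p := p)) := by
  refine (injective_iff_map_eq_one _).2 fun x hx => ?_
  induction x using QuotientGroup.induction_on with
  | H M => exact (QuotientGroup.eq_one_iff M).2 (ker_blocks_eq_center (p := p) ▸ hx)

noncomputable def glue (X Y : UT p 3) : UT p 4 :=
  mk4 (mat X 0 1) (mat X 1 2) (mat Y 1 2) (mat X 0 2) (mat Y 0 2) 0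

lemma blocks_glue {X Y : UT p 3} (h : mat X 1 2 = mat Y 0 1) : blocks (glue X Y) = (X, Y) := by
  rw [glue, blocks_mk4, h, ← eq_mk3, ← h, ← eq_mk3]

lemma superdiag_eq_of_blocks_eq {M : UT p 4} {X Y : UT p 3} (h : blocks M = (X, Y)) :
    entryUT4 p M 0 1 = mat X 0 1 ∧ entryUT4 p M 1 2 = mat X 1 2 ∧ entryUT4 p M 1 2 = mat Y 0 1 ∧
      entryUT4 p M 2 3 = mat Y 1 2 := by
  obtain ⟨rfl, rfl⟩ := Prod.ext_iff.1 h
  exact ⟨rfl, rfl, rfl, rfl⟩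

end UT

open UT

@[simp] lemma mat_elemUT3 (i j : Fin 3) (hij : i ≠ j) (hle : i < j) (c : ZMod p) :
    mat (elemUT3 p i j hij hle c) = 1 + Matrix.single i j c := rfl

lemma AU_eq_mk3 : AU p = mk3 1 0 0 := by
  ext i j; fin_cases i <;> fin_cases j <;> simp [AU, Matrix.single]

lemma BU_eq_mk3 : BU p = mk3 0 1 0 := by
  ext i j; fin_cases i <;> fin_cases j <;> simp [BU, Matrix.single]

lemma CU_eq_mk3 : CU p = mk3 0 0 1 := by
  ext i j; fin_cases i <;> fin_cases j <;> simp [CU, Matrix.single]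

lemma CU_pow (n : ℕ) : CU p ^ n = mk3 0 0 (n : ZMod p) := by
  induction n with
  | zero => exact (mk3_eq_one_iff.2 ⟨rfl, rfl, Nat.cast_zero⟩).symm
  | succ n ih => rw [pow_succ, ih, CU_eq_mk3, mk3_mul]; simp

noncomputable def superdiag3 : UT p 3 →* Multiplicative (ZMod p × ZMod p) where
  toFun X := .ofAdd (mat X 0 1, mat X 1 2)
  map_one' := by simp
  map_mul' X Y := by
    rw [eq_mk3 X, eq_mk3 Y, mk3_mul]
    simp [← ofAdd_add]

lemma ker_superdiag3 : (superdiag3 (p := p)).ker = Subgroup.zpowers (CU p) := by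
  refine le_antisymm (fun X hX => ?_) (Subgroup.zpowers_le.2 ?_)
  · obtain ⟨h01, h12⟩ : mat X 0 1 = 0 ∧ mat X 1 2 = 0 := by
      simpa [superdiag3, Prod.ext_iff] using hX
    rw [eq_mk3 X, h01, h12, ← ZMod.natCast_zmod_val (mat X 0 2), ← CU_pow]
    exact Subgroup.npow_mem_zpowers _ _
  · simp [superdiag3, CU_eq_mk3]

lemma superdiag3_AU_pow_mul_BU_pow (m n : ℕ) :
    superdiag3 (AU p ^ m * BU p ^ n) = .ofAdd ((m : ZMod p), (n : ZMod p)) := by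
  rw [map_mul, map_pow, map_pow]
  simp [superdiag3, AU_eq_mk3, BU_eq_mk3, ← ofAdd_nsmul, ← ofAdd_add]

lemma inv_mul_mem_zpowers_CU_iff (X : UT p 3) (a b : ZMod p) :
    (AU p ^ a.val * BU p ^ b.val)⁻¹ * X ∈ Subgroup.zpowers (CU p) ↔
      mat X 0 1 = a ∧ mat X 1 2 = b := by
  rw [← ker_superdiag3, MonoidHom.mem_ker, map_mul, map_inv, inv_mul_eq_one,
    superdiag3_AU_pow_mul_BU_pow, ZMod.natCast_zmod_val, ZMod.natCast_zmod_val, eq_comm]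
  simp [superdiag3]

namespace ContinuousToDiscrete

variable {G H K : Type*} [TopologicalSpace G]

lemma comp {f : G → H} (hf : ContinuousToDiscrete f) (u : H → K) :
    ContinuousToDiscrete fun g => u (f g) :=
  @Continuous.comp _ _ _ _ ⊥ ⊥ _ _ continuous_bot hf

lemma prodMk {f : G → H} {k : G → K} (hf : ContinuousToDiscrete f)
    (hk : ContinuousToDiscrete k) : ContinuousToDiscrete fun g => (f g, k g) := by
  let _ : TopologicalSpace H := ⊥
  let _ : TopologicalSpace K := ⊥
  have : DiscreteTopology H := ⟨rfl⟩
  have : DiscreteTopology K := ⟨rfl⟩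
  rw [ContinuousToDiscrete, ← DiscreteTopology.eq_bot (α := H × K)]
  exact Continuous.prodMk hf hk

end ContinuousToDiscrete

lemma MonoidHom.exists_coe_eq_of_injective {G Q P : Type*} [MulOneClass G] [MulOneClass Q]
    [MulOneClass P] {ι : Q →* P} (hι : Function.Injective ι) (φ : G →* P) (f : G → Q)
    (hf : ∀ g, ι (f g) = φ g) : ∃ ρ : G →* Q, ⇑ρ = f :=
  ⟨{ toFun := f
     map_one' := hι (by rw [hf, map_one, map_one])
     map_mul' := fun g h => hι (by rw [map_mul, hf, hf, hf, map_mul]) }, rfl⟩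

theorem exists_hom_U4_mod_center_iff_general (G : Type*) [Group G] [TopologicalSpace G]
    (α₁ α₂ α₃ : G → ZMod p) :
    (∃ ρ : G →* (↥(UT p 4) ⧸ Subgroup.center ↥(UT p 4)),
        ContinuousToDiscrete ρ ∧
        ∀ (g : G) (M : ↥(UT p 4)), (QuotientGroup.mk M : ↥(UT p 4) ⧸ Subgroup.center ↥(UT p 4)) = ρ g →
          entryUT4 p M 0 1 = α₁ g ∧ entryUT4 p M 1 2 = α₂ g ∧ entryUT4 p M 2 3 = α₃ g) ↔
      (∃ τ τ' : G →* ↥(UT p 3),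
        ContinuousToDiscrete τ ∧ ContinuousToDiscrete τ' ∧
        ∀ g : G,
          (AU p ^ (α₁ g).val * BU p ^ (α₂ g).val)⁻¹ * τ g ∈ Subgroup.zpowers (CU p) ∧
          (AU p ^ (α₂ g).val * BU p ^ (α₃ g).val)⁻¹ * τ' g ∈ Subgroup.zpowers (CU p)) := by
  simp only [inv_mul_mem_zpowers_CU_iff]
  constructor
  · rintro ⟨ρ, hρ, hρ_entries⟩
    refine ⟨(MonoidHom.fst _ _).comp (blocksModCenter.comp ρ),
      (MonoidHom.snd _ _).comp (blocksModCenter.comp ρ), hρ.comp fun x => (blocksModCenter x).1,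
      hρ.comp fun x => (blocksModCenter x).2, fun g => ?_⟩
    obtain ⟨M, hM⟩ := QuotientGroup.mk_surjective (ρ g)
    obtain ⟨h₁, h₂, h₃⟩ := hρ_entries g M hM
    obtain ⟨e₁, e₂, e₂', e₃⟩ := superdiag_eq_of_blocks_eq (M := M) rfl
    simp only [MonoidHom.comp_apply, ← hM, blocksModCenter_mk]
    exact ⟨⟨e₁ ▸ h₁, e₂ ▸ h₂⟩, e₂' ▸ h₂, e₃ ▸ h₃⟩
  · rintro ⟨τ, τ', hτ, hτ', hτ_entries⟩
    have hglue : ∀ g, blocks (glue (τ g) (τ' g)) = (τ g, τ' g) := fun g =>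
      blocks_glue (((hτ_entries g).1.2).trans (hτ_entries g).2.1.symm)
    obtain ⟨ρ, hρ⟩ := MonoidHom.exists_coe_eq_of_injective blocksModCenter_injective
      (τ.prod τ') (fun g => (glue (τ g) (τ' g) : UT p 4 ⧸ Subgroup.center (UT p 4))) hglue
    refine ⟨ρ, ?_, fun g M hM => ?_⟩
    · rw [hρ]
      exact (hτ.prodMk hτ').comp fun x => ((glue x.1 x.2 : UT p 4) : UT p 4 ⧸ Subgroup.center _)
    have hM' : blocks M = (τ g, τ' g) := by
      rw [← blocksModCenter_mk, hM, hρ, blocksModCenter_mk, hglue]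
    obtain ⟨e₁, e₂, -, e₃⟩ := superdiag_eq_of_blocks_eq hM'
    exact ⟨e₁.trans (hτ_entries g).1.1, e₂.trans (hτ_entries g).1.2, e₃.trans (hτ_entries g).2.2⟩

/-- For a pro-`p` group `G` and continuous homomorphisms
`α₁, α₂, α₃ : G → ℤ/p`, there is a continuous homomorphism `ρ̄ : G → U₄/Z(U₄)` whose
`(i, i+1)`-entries are the `αᵢ` if and only if there are continuous homomorphisms
`τ, τ' : G → U₃` with `τ(g) ≡ A^{α₁(g)} B^{α₂(g)}` and `τ'(g) ≡ A^{α₂(g)} B^{α₃(g)}`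
modulo `⟨C⟩`. -/
theorem exists_hom_U4_mod_center_iff (G : Type*) [Group G] [TopologicalSpace G]
    [IsTopologicalGroup G] (hG : IsProPGroup p G)
    (α₁ α₂ α₃ : G → ZMod p)
    (hα₁ : ∀ g h : G, α₁ (g * h) = α₁ g + α₁ h)
    (hα₂ : ∀ g h : G, α₂ (g * h) = α₂ g + α₂ h)
    (hα₃ : ∀ g h : G, α₃ (g * h) = α₃ g + α₃ h)
    (hc₁ : ContinuousToDiscrete α₁) (hc₂ : ContinuousToDiscrete α₂)
    (hc₃ : ContinuousToDiscrete α₃) :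
    (∃ ρ : G →* (↥(UT p 4) ⧸ Subgroup.center ↥(UT p 4)),
        ContinuousToDiscrete ρ ∧
        ∀ (g : G) (M : ↥(UT p 4)), (QuotientGroup.mk M : ↥(UT p 4) ⧸ Subgroup.center ↥(UT p 4)) = ρ g →
          entryUT4 p M 0 1 = α₁ g ∧ entryUT4 p M 1 2 = α₂ g ∧ entryUT4 p M 2 3 = α₃ g) ↔
      (∃ τ τ' : G →* ↥(UT p 3),
        ContinuousToDiscrete τ ∧ ContinuousToDiscrete τ' ∧
        ∀ g : G,
          (AU p ^ (α₁ g).val * BU p ^ (α₂ g).val)⁻¹ * τ g ∈ Subgroup.zpowers (CU p) ∧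
          (AU p ^ (α₂ g).val * BU p ^ (α₃ g).val)⁻¹ * τ' g ∈ Subgroup.zpowers (CU p)) :=
  exists_hom_U4_mod_center_iff_general G α₁ α₂ α₃
end
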